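/- The Fibonacci word f — the unique right-infinite binary word starting with 0 that is a fixed point of the substitution φ with φ(0) = 01 and φ(1) = 0 (equivalently, f = lim f_n where f_0 = 0, f_1 = 01, and f_{n+1} = f_n f_{n-1}) — is an infinite Sturmian word; that is, p_f(n) = n + 1 for all n ≥ 1. -/

import Mathlib

/-- A finite word `u` is a subword (factor) of the right-infinite word `w` if
it occurs as a contiguous block of consecutive letters of `w`. -/
def IsFactor {A : Type*} (w : ℕ → A) (u : List A) : Prop :=
  ∃ i : ℕ, u = (List.range u.length).map fun j => w (i + j)

/-- The subword complexity of a right-infinite word `w`: the number of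
distinct subwords of `w` of length `n`. -/
noncomputable def icomplexity {A : Type*} (w : ℕ → A) (n : ℕ) : ℕ :=
  Set.ncard {u : List A | u.length = n ∧ IsFactor w u}

/-- The finite Fibonacci words, with `0 = false` and `1 = true`:
`f 0 = 0`, `f 1 = 01`, `f (n+2) = f (n+1) ++ f n`.  Each `fibSeq n` is a
prefix of `fibSeq (n+1)`, and these are precisely the iterates `φⁿ(0)` of the
substitution `φ(0) = 01`, `φ(1) = 0`. -/
def fibSeq : ℕ → List Bool
  | 0 => [false]
  | 1 => [false, true]
  | (n + 2) => fibSeq (n + 1) ++ fibSeq n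

/-- The infinite Fibonacci word, the direct limit of the words `fibSeq n`
(equivalently, the unique fixed point of `φ(0) = 01`, `φ(1) = 0` starting
with `0`): its `i`-th letter is the `i`-th letter of any `fibSeq n` long
enough, e.g. `fibSeq (i+1)`, whose length exceeds `i`. -/
def fibWord : ℕ → Bool := fun i => (fibSeq (i + 1)).getD i false

/-!
The Fibonacci word is the mechanical word of slope and intercept `2 - φ = φ⁻²`: its `k`-th letter
is `⌊(k + 2)(2 - φ)⌋ - ⌊(k + 1)(2 - φ)⌋`. This follows from the recursion `f (n+2) = f (n+1) f n`:
`F n * (2 - φ)` lies within `|ψ| ^ n` of an integer, while, by the best-approximation property of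
the Fibonacci convergents of `φ`, every `m * φ` with `0 < m < F (n + 1)` stays at distance at least
`|ψ| ^ n` from the integers, so shifting the argument by `F n` shifts all the relevant floors by the
same integer.

The number of ones in a factor of length `n` of a mechanical word of slope `0 ≤ α < 1` is
`⌊x + nα⌋ - ⌊x⌋` for some `x`, which takes only the values `⌊nα⌋` and `⌊nα⌋ + 1`; so mechanical
words are balanced, and for irrational `α` they are not eventually periodic. Balance leaves room
for at most one right special factor of each length, aperiodicity forces at least one, so the
complexity grows by exactly one from each length to the next.
-/

section Factors

variable {α : Type*} (w : ℕ → α)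

def factorAt (i n : ℕ) : List α := (List.range n).map fun j => w (i + j)

def factors (n : ℕ) : Set (List α) := Set.range fun i => factorAt w i n

def IsEventuallyPeriodic : Prop := ∃ x q, q ≠ 0 ∧ Function.Periodic (fun m => w (x + m)) q

variable {w}

@[simp]
lemma length_factorAt (i n : ℕ) : (factorAt w i n).length = n := by simp [factorAt]

lemma factorAt_succ (i n : ℕ) : factorAt w i (n + 1) = factorAt w i n ++ [w (i + n)] := by
  simp [factorAt, List.range_succ]

lemma factorAt_succ' (i n : ℕ) : factorAt w i (n + 1) = w i :: factorAt w (i + 1) n := by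
  simp only [factorAt, List.range_succ_eq_map, List.map_cons, List.map_map, add_zero]
  congr 1
  exact List.map_congr_left fun j _ => by simp [Nat.add_right_comm, Nat.add_assoc]

lemma icomplexity_eq_ncard_factors (n : ℕ) : icomplexity w n = (factors w n).ncard := by
  unfold icomplexity factors IsFactor
  congr 1
  ext u
  constructor
  · rintro ⟨rfl, i, hi⟩
    exact ⟨i, hi.symm⟩
  · rintro ⟨i, rfl⟩
    exact ⟨length_factorAt i n, i, by simp [factorAt]⟩

lemma factors_finite [Finite α] (n : ℕ) : (factors w n).Finite :=
  (List.finite_length_eq α n).subset <| Set.range_subset_iff.2 fun i => length_factorAt i n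

lemma mem_factors_of_cons_mem {a : α} {u : List α} {n : ℕ} (h : a :: u ∈ factors w (n + 1)) :
    u ∈ factors w n := by
  obtain ⟨i, hi⟩ := h
  exact ⟨i + 1, (List.cons_eq_cons.1 ((factorAt_succ' i n).symm.trans hi)).2⟩

lemma factors_zero : factors w 0 = {[]} := by
  ext u; simp [factors, factorAt]

end Factors

section Binary

variable {w : ℕ → Bool}

def rightSpecialFactors (w : ℕ → Bool) (n : ℕ) : Set (List Bool) :=
  {u | u ++ [false] ∈ factors w (n + 1) ∧ u ++ [true] ∈ factors w (n + 1)}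

lemma ncard_factors_succ (n : ℕ) :
    (factors w (n + 1)).ncard = (factors w n).ncard + (rightSpecialFactors w n).ncard := by
  set ext : Bool → Set (List Bool) := fun a => {u | u ++ [a] ∈ factors w (n + 1)}
  have ext_subset (a : Bool) : ext a ⊆ factors w n := by
    rintro u ⟨i, hi⟩
    refine ⟨i, ?_⟩
    simp only [factorAt_succ] at hi ⊢
    exact (List.append_inj' hi (by rfl)).1
  have mem_ext (i : ℕ) : factorAt w i n ∈ ext (w (i + n)) := ⟨i, factorAt_succ i n⟩
  have ext_union : ext false ∪ ext true = factors w n := by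
    refine Set.Subset.antisymm (Set.union_subset (ext_subset _) (ext_subset _)) ?_
    rintro _ ⟨i, rfl⟩
    have := mem_ext i
    generalize w (i + n) = a at this ⊢
    cases a
    exacts [Or.inl this, Or.inr this]
  have factors_succ :
      factors w (n + 1) = (· ++ [false]) '' ext false ∪ (· ++ [true]) '' ext true := by
    refine Set.Subset.antisymm ?_ ?_
    · rintro _ ⟨i, rfl⟩
      have := mem_ext i
      simp only [factorAt_succ]
      generalize w (i + n) = a at this ⊢
      cases a
      exacts [Or.inl ⟨_, this, rfl⟩, Or.inr ⟨_, this, rfl⟩]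
    · rintro _ (⟨u, hu, rfl⟩ | ⟨u, hu, rfl⟩) <;> exact hu
  have hfin (a : Bool) : (ext a).Finite := (factors_finite n).subset (ext_subset a)
  have hdisj : Disjoint ((· ++ [false]) '' ext false) ((· ++ [true]) '' ext true) := by
    rw [Set.disjoint_left]
    rintro _ ⟨u, _, rfl⟩ ⟨v, _, h⟩
    simpa using (List.append_inj' h rfl).2
  rw [factors_succ, Set.ncard_union_eq hdisj ((hfin _).image _) ((hfin _).image _),
    Set.ncard_image_of_injective _ (List.append_left_injective _),
    Set.ncard_image_of_injective _ (List.append_left_injective _),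
    ← Set.ncard_union_add_ncard_inter _ _ (hfin _) (hfin _), ext_union]
  rfl

lemma length_of_mem_rightSpecialFactors {u : List Bool} {n : ℕ}
    (hu : u ∈ rightSpecialFactors w n) : u.length = n := by
  obtain ⟨i, hi⟩ := hu.1
  simpa using congrArg List.length hi.symm

def IsBalanced (w : ℕ → Bool) : Prop :=
  ∀ n, ∀ u ∈ factors w n, ∀ v ∈ factors w n, u.count true ≤ v.count true + 1

lemma IsBalanced.rightSpecialFactors_subsingleton (hw : IsBalanced w) (n : ℕ) :
    (rightSpecialFactors w n).Subsingleton := by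
  induction n with
  | zero =>
    intro u hu v hv
    rw [List.eq_nil_of_length_eq_zero (length_of_mem_rightSpecialFactors hu),
      List.eq_nil_of_length_eq_zero (length_of_mem_rightSpecialFactors hv)]
  | succ n ih =>
    intro u hu v hv
    obtain ⟨a, u, rfl⟩ := List.exists_of_length_succ _ (length_of_mem_rightSpecialFactors hu)
    obtain ⟨b, v, rfl⟩ := List.exists_of_length_succ _ (length_of_mem_rightSpecialFactors hv)
    obtain rfl : u = v := ih ⟨mem_factors_of_cons_mem hu.1, mem_factors_of_cons_mem hu.2⟩
      ⟨mem_factors_of_cons_mem hv.1, mem_factors_of_cons_mem hv.2⟩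
    have not_both : ¬ (true :: u ++ [true] ∈ factors w (n + 2) ∧
        false :: u ++ [false] ∈ factors w (n + 2)) := fun ⟨h1, h0⟩ => by
      simpa using hw _ _ h1 _ h0
    cases a <;> cases b
    exacts [rfl, (not_both ⟨hv.2, hu.1⟩).elim, (not_both ⟨hu.2, hv.1⟩).elim, rfl]

lemma rightSpecialFactors_nonempty (hw : ¬ IsEventuallyPeriodic w) (n : ℕ) :
    (rightSpecialFactors w n).Nonempty := by
  by_contra hempty
  apply hw
  have next_eq {i j : ℕ} (h : factorAt w i n = factorAt w j n) : w (i + n) = w (j + n) := by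
    by_contra hne
    apply hempty
    refine ⟨factorAt w i n, ?_⟩
    have hi : factorAt w i n ++ [w (i + n)] ∈ factors w (n + 1) := ⟨i, factorAt_succ i n⟩
    have hj : factorAt w i n ++ [w (j + n)] ∈ factors w (n + 1) := ⟨j, h ▸ factorAt_succ j n⟩
    revert hi hj hne
    cases w (i + n) <;> cases w (j + n) <;> simp_all [rightSpecialFactors]
  have shift {i j : ℕ} (h : factorAt w i n = factorAt w j n) :
      factorAt w (i + 1) n = factorAt w (j + 1) n := by
    have := factorAt_succ (w := w) i n
    rw [h, next_eq h, ← factorAt_succ, factorAt_succ', factorAt_succ'] at this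
    exact (List.cons_eq_cons.1 this).2
  obtain ⟨x, y, hxy, hxy_eq⟩ := (factors_finite n).exists_lt_map_eq_of_forall_mem
    (f := fun i => factorAt w i n) fun i => Set.mem_range_self i
  have eventually_eq (m : ℕ) : factorAt w (x + m) n = factorAt w (y + m) n := by
    induction m with
    | zero => exact hxy_eq
    | succ m ih => exact shift ih
  refine ⟨x + n, y - x, by omega, fun m => ?_⟩
  convert (next_eq (eventually_eq m)).symm using 2 <;> omega

theorem IsBalanced.icomplexity_eq (hb : IsBalanced w) (hp : ¬ IsEventuallyPeriodic w) (n : ℕ) :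
    icomplexity w n = n + 1 := by
  induction n with
  | zero => simp [icomplexity_eq_ncard_factors, factors_zero]
  | succ n ih =>
    obtain ⟨u, hu⟩ := rightSpecialFactors_nonempty hp n
    rw [icomplexity_eq_ncard_factors] at ih ⊢
    rw [ncard_factors_succ, ih, (hb.rightSpecialFactors_subsingleton n).eq_singleton_of_mem hu,
      Set.ncard_singleton]

end Binary

lemma floor_add_sub_floor_mem_Icc (x a : ℝ) : ⌊x + a⌋ - ⌊x⌋ ∈ Set.Icc ⌊a⌋ (⌊a⌋ + 1) :=
  ⟨by linarith [Int.le_floor_add x a], by linarith [Int.le_floor_add_floor x a]⟩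

/-- For `0 ≤ α < 1` this is the lower mechanical word `s_{α,ρ}`. In general the increments of
`k ↦ ⌊k * α + ρ⌋` are `⌊α⌋` or `⌊α⌋ + 1`, and the letter records which. -/
noncomputable def mechanicalWord (α ρ : ℝ) (k : ℕ) : Bool :=
  decide (⌊(k + 1) * α + ρ⌋ - ⌊k * α + ρ⌋ = ⌊α⌋ + 1)

lemma count_factorAt_mechanicalWord (α ρ : ℝ) (i n : ℕ) :
    ((factorAt (mechanicalWord α ρ) i n).count true : ℤ) =
      ⌊(i + n) * α + ρ⌋ - ⌊i * α + ρ⌋ - n * ⌊α⌋ := by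
  induction n with
  | zero => simp [factorAt]
  | succ n ih =>
    have hstep := floor_add_sub_floor_mem_Icc ((i + n) * α + ρ) α
    rw [factorAt_succ, List.count_append, Nat.cast_add, ih, List.count_singleton]
    simp only [mechanicalWord, beq_iff_eq, Nat.cast_add, Nat.cast_one]
    rw [show ((i : ℝ) + n + 1) * α + ρ = (i + n) * α + ρ + α by ring]
    split_ifs with h <;> simp only [decide_eq_true_eq] at h <;> push_cast <;> grind

lemma mechanicalWord_isBalanced (α ρ : ℝ) : IsBalanced (mechanicalWord α ρ) := by
  rintro n _ ⟨i, rfl⟩ _ ⟨j, rfl⟩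
  have hi := floor_add_sub_floor_mem_Icc (i * α + ρ) (n * α)
  have hj := floor_add_sub_floor_mem_Icc (j * α + ρ) (n * α)
  rw [show (i : ℝ) * α + ρ + n * α = (i + n) * α + ρ by ring] at hi
  rw [show (j : ℝ) * α + ρ + n * α = (j + n) * α + ρ by ring] at hj
  have := count_factorAt_mechanicalWord α ρ i n
  have := count_factorAt_mechanicalWord α ρ j n
  simp only [Set.mem_Icc] at hi hj
  dsimp only
  omega

lemma mechanicalWord_not_isEventuallyPeriodic {α : ℝ} (hα : Irrational α) (ρ : ℝ) :
    ¬ IsEventuallyPeriodic (mechanicalWord α ρ) := by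
  rintro ⟨x, q, hq, hper⟩
  set C : ℤ := (factorAt (mechanicalWord α ρ) x q).count true + q * ⌊α⌋
  have factorAt_periodic (k : ℕ) :
      factorAt (mechanicalWord α ρ) (x + k * q) q = factorAt (mechanicalWord α ρ) x q :=
    List.map_congr_left fun j _ => by simpa [add_comm, add_left_comm, add_assoc] using hper.nat_mul k j
  have floor_progression (k : ℕ) : ⌊(x + k * q : ℝ) * α + ρ⌋ = ⌊x * α + ρ⌋ + k * C := by
    induction k with
    | zero => simp
    | succ k ih =>
      have := count_factorAt_mechanicalWord α ρ (x + k * q) q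
      rw [factorAt_periodic] at this
      push_cast at this ⊢
      rw [show ((x : ℝ) + (k + 1) * q) = x + k * q + q by ring]
      linarith
  have bounded (k : ℕ) : |(k : ℝ) * (q * α - C)| < 1 := by
    have h₁ := Int.floor_le ((x + k * q : ℝ) * α + ρ)
    have h₂ := Int.lt_floor_add_one ((x + k * q : ℝ) * α + ρ)
    have h₃ := Int.floor_le (x * α + ρ)
    have h₄ := Int.lt_floor_add_one (x * α + ρ)
    rw [floor_progression k] at h₁ h₂
    push_cast at h₁ h₂
    rw [abs_lt]
    constructor <;> linarith
  have hzero : (q : ℝ) * α - C = 0 := by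
    by_contra hne
    obtain ⟨k, hk⟩ := exists_nat_gt |(q : ℝ) * α - C|⁻¹
    have := bounded k
    rw [abs_mul, Nat.abs_cast] at this
    have := (inv_lt_iff_one_lt_mul₀ (abs_pos.2 hne)).1 hk
    linarith
  exact hα ⟨C / q, by push_cast; field_simp; linarith⟩

open Real
open Nat (fib fib_add_two)
open scoped goldenRatio

lemma irrational_two_sub_goldenRatio : Irrational (2 - φ) := by
  simpa using goldenRatio_irrational.natCast_sub 2

lemma abs_goldenConj_sq : |ψ| ^ 2 = 1 - |ψ| := by
  rw [abs_of_neg goldenConj_neg, neg_sq, goldenConj_sq]; ring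

lemma abs_goldenConj_le_one : |ψ| ≤ 1 := by
  rw [abs_of_neg goldenConj_neg]; linarith [neg_one_lt_goldenConj]

theorem abs_goldenConj_pow_le_abs_mul_goldenRatio_sub :
    ∀ n m : ℕ, 0 < m → m < fib (n + 1) → ∀ p : ℤ, |ψ| ^ n ≤ |m * φ - p|
  | 0, m, hm0, hm, _ | 1, m, hm0, hm, _ => by simp at hm; omega
  | n + 2, m, hm0, hm, p => by
    have pow_succ_le (k : ℕ) : |ψ| ^ (k + 1) ≤ |ψ| ^ k :=
      pow_le_pow_of_le_one (abs_nonneg _) abs_goldenConj_le_one k.le_succ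
    rcases lt_or_ge m (fib (n + 2)) with hlt | hge
    · exact (pow_succ_le _).trans
        (abs_goldenConj_pow_le_abs_mul_goldenRatio_sub (n + 1) m hm0 hlt p)
    obtain ⟨r, rfl⟩ := Nat.exists_eq_add_of_le hge
    have hr : r < fib (n + 1) := by
      have : fib (n + 2) + r < fib (n + 1) + fib (n + 2) := hm.trans_eq fib_add_two
      omega
    set Q : ℤ := p - fib (n + 3)
    have hdecomp : ((fib (n + 2) + r : ℕ) : ℝ) * φ - p = (r * φ - Q) - ψ ^ (n + 2) := by
      have := fib_succ_sub_goldenRatio_mul_fib (n + 2)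
      push_cast [Q]
      linarith
    -- `r = 0 ∧ Q = 0` is the convergent `F (n + 3) / F (n + 2)` itself, where equality holds.
    have hrQ : (r = 0 ∧ Q = 0) ∨ |ψ| ^ n ≤ |r * φ - Q| := by
      by_cases hr0 : r = 0
      · by_cases hQ : Q = 0
        · exact Or.inl ⟨hr0, hQ⟩
        · refine Or.inr ?_
          have : (1 : ℝ) ≤ |(Q : ℝ)| := by rw [← Int.cast_abs]; exact_mod_cast Int.one_le_abs hQ
          rw [hr0, Nat.cast_zero, zero_mul, zero_sub, abs_neg]
          exact (pow_le_one₀ (abs_nonneg _) abs_goldenConj_le_one).trans this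
      · exact Or.inr (abs_goldenConj_pow_le_abs_mul_goldenRatio_sub n r (by omega) hr Q)
    rw [hdecomp]
    rcases hrQ with ⟨rfl, hQ⟩ | hrQ
    · simp [hQ, abs_pow]
    calc |ψ| ^ (n + 2) ≤ |ψ| ^ (n + 1) := pow_succ_le _
      _ = |ψ| ^ n - |ψ| ^ (n + 2) := by rw [pow_add, pow_add, abs_goldenConj_sq]; ring
      _ ≤ |r * φ - Q| - |ψ ^ (n + 2)| := by rw [abs_pow]; linarith
      _ ≤ _ := abs_sub_abs_le_abs_sub _ _

lemma floor_add_eq_floor_of_abs_le {x δ : ℝ} (hδ : ∀ p : ℤ, |δ| ≤ |x - p|) (hx : ∀ p : ℤ, x + δ ≠ p) :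
    ⌊x + δ⌋ = ⌊x⌋ := by
  have h₀ : |δ| ≤ x - ⌊x⌋ := (hδ ⌊x⌋).trans_eq (abs_of_nonneg (sub_nonneg.2 (Int.floor_le x)))
  have h₁ : |δ| ≤ ⌊x⌋ + 1 - x := by
    have := hδ (⌊x⌋ + 1)
    rwa [abs_sub_comm, abs_of_pos (a := ((⌊x⌋ + 1 : ℤ) : ℝ) - x)
      (by push_cast; linarith [Int.lt_floor_add_one x]), Int.cast_add, Int.cast_one] at this
  rw [Int.floor_eq_iff]
  refine ⟨by linarith [neg_abs_le δ], lt_of_le_of_ne ?_ (by exact_mod_cast hx (⌊x⌋ + 1))⟩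
  linarith [le_abs_self δ]

lemma floor_add_fib_mul_two_sub_goldenRatio (n m : ℕ) (hm0 : 0 < m) (hm : m < fib (n + 1)) :
    ⌊((m : ℝ) + fib n) * (2 - φ)⌋ = ⌊(m : ℝ) * (2 - φ)⌋ + (2 * fib n - fib (n + 1) : ℤ) := by
  have hfib := fib_succ_sub_goldenRatio_mul_fib n
  rw [show ((m : ℝ) + fib n) * (2 - φ) =
      m * (2 - φ) + ψ ^ n + ((2 * fib n - fib (n + 1) : ℤ) : ℝ) by push_cast; linarith,
    Int.floor_add_intCast, floor_add_eq_floor_of_abs_le]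
  · intro p
    rw [abs_pow, show (m : ℝ) * (2 - φ) - p = -(m * φ - (2 * m - p : ℤ)) by push_cast; ring, abs_neg]
    exact abs_goldenConj_pow_le_abs_mul_goldenRatio_sub n m hm0 hm _
  · intro p hp
    have hirr : Irrational (((m + fib n : ℕ) : ℝ) * (2 - φ)) := by
      exact irrational_two_sub_goldenRatio.natCast_mul (by omega)
    refine hirr.ne_int (p + (2 * fib n - fib (n + 1) : ℤ)) ?_
    push_cast at hp ⊢
    linarith

lemma mechanicalWord_fib_add (n k : ℕ) (hk : k + 2 < fib (n + 1)) :
    mechanicalWord (2 - φ) (2 - φ) (fib n + k) = mechanicalWord (2 - φ) (2 - φ) k := by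
  have h₁ := floor_add_fib_mul_two_sub_goldenRatio n (k + 1) (by omega) (by omega)
  have h₂ := floor_add_fib_mul_two_sub_goldenRatio n (k + 2) (by omega) (by omega)
  push_cast at h₁ h₂
  simp only [mechanicalWord, Nat.cast_add]
  rw [show ((fib n : ℝ) + k + 1) * (2 - φ) + (2 - φ) = (k + 2 + fib n) * (2 - φ) by ring,
    show ((fib n : ℝ) + k) * (2 - φ) + (2 - φ) = (k + 1 + fib n) * (2 - φ) by ring, h₁, h₂,
    show ((k : ℝ) + 1) * (2 - φ) + (2 - φ) = (k + 2) * (2 - φ) by ring,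
    show (k : ℝ) * (2 - φ) + (2 - φ) = (k + 1) * (2 - φ) by ring, add_sub_add_right_eq_sub]

lemma floor_two_sub_goldenRatio : ⌊2 - φ⌋ = 0 :=
  Int.floor_eq_zero_iff.2 ⟨by linarith [goldenRatio_lt_two], by linarith [one_lt_goldenRatio]⟩

lemma mechanicalWord_two_sub_goldenRatio_zero : mechanicalWord (2 - φ) (2 - φ) 0 = false := by
  have := floor_add_fib_mul_two_sub_goldenRatio 2 1 one_pos (by decide)
  norm_num [fib_add_two] at this
  simp [mechanicalWord, ← two_mul, this, floor_two_sub_goldenRatio]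

lemma mechanicalWord_two_sub_goldenRatio_one : mechanicalWord (2 - φ) (2 - φ) 1 = true := by
  have h₂ := floor_add_fib_mul_two_sub_goldenRatio 2 1 one_pos (by decide)
  have h₃ := floor_add_fib_mul_two_sub_goldenRatio 3 1 one_pos (by decide)
  norm_num [fib_add_two] at h₂ h₃
  simp only [mechanicalWord, Nat.cast_one, decide_eq_true_eq]
  rw [show ((1 : ℝ) + 1) * (2 - φ) + (2 - φ) = 3 * (2 - φ) by ring, one_mul, ← two_mul, h₂, h₃,
    floor_two_sub_goldenRatio]
  rfl

lemma length_fibSeq : ∀ n, (fibSeq n).length = fib (n + 2)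
  | 0 => rfl
  | 1 => rfl
  | n + 2 => by
    rw [fibSeq, List.length_append, length_fibSeq, length_fibSeq, add_comm]
    exact fib_add_two.symm

lemma getD_fibSeq :
    ∀ n k, k < fib (n + 2) → (fibSeq n).getD k false = mechanicalWord (2 - φ) (2 - φ) k
  | 0, 0, _ | 1, 0, _ => mechanicalWord_two_sub_goldenRatio_zero.symm
  | 1, 1, _ => mechanicalWord_two_sub_goldenRatio_one.symm
  | 0, _ + 1, hk | 1, _ + 2, hk => by norm_num [fib_add_two] at hk <;> omega
  | n + 2, k, hk => by
    rw [fibSeq]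
    rcases lt_or_ge k (fib (n + 3)) with hlt | hge
    · rw [List.getD_append _ _ _ _ (by rwa [length_fibSeq])]
      exact getD_fibSeq (n + 1) k hlt
    obtain ⟨k, rfl⟩ := Nat.exists_eq_add_of_le hge
    have hk' : fib (n + 3) + k < fib (n + 2) + fib (n + 3) := hk.trans_eq fib_add_two
    have : 2 ≤ fib (n + 3) := Nat.fib_mono (show 3 ≤ n + 3 by omega)
    rw [List.getD_append_right _ _ _ _ (by rw [length_fibSeq]; omega), length_fibSeq,
      Nat.add_sub_cancel_left, getD_fibSeq n k (by omega),
      mechanicalWord_fib_add (n + 3) k (by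
        have : fib (n + 4) = fib (n + 2) + fib (n + 3) := fib_add_two
        show k + 2 < fib (n + 4)
        omega)]

lemma fibWord_eq_mechanicalWord : fibWord = mechanicalWord (2 - φ) (2 - φ) := by
  funext k
  exact getD_fibSeq (k + 1) k (by have := Nat.le_fib_add_one (k + 3); show k < fib (k + 3); omega)

theorem fibWord_sturmian_general (n : ℕ) : icomplexity fibWord n = n + 1 := by
  rw [fibWord_eq_mechanicalWord]
  exact (mechanicalWord_isBalanced _ _).icomplexity_eq
    (mechanicalWord_not_isEventuallyPeriodic irrational_two_sub_goldenRatio _) n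

/-- The Fibonacci word is an infinite Sturmian word:
`p_f(n) = n + 1` for all `n ≥ 1`. -/
theorem fibWord_sturmian (n : ℕ) (hn : 1 ≤ n) :
    icomplexity fibWord n = n + 1 :=
  fibWord_sturmian_general n
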